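/- Let d ≥ 2, b > a ≥ 1, 0 < l ≤ b, and suppose a + l > b. If the function f(x) = ((a x + l)/b)^d has no fixed point in [1,∞), then h(T_{M(a,b;l)}) > log b. -/

import Mathlib

/-!
Lumping the states of `M(a,b;l)` into its two diagonal blocks gives the weighted quotient
matrix `[[a, l], [0, b]]`. Hence the number of `n`-blocks with root in the `E_b` block is
`q_n = b^(|Δ_n| - 1)`, and the ratio `x_n = p_n / q_n` for roots in the `E_a` block is the orbit
of `1` under `f x = ((a x + l) / b)^d`. As `f 1 > 1` and `f` has no fixed point in `[1, ∞)`, the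
orbit increases to infinity; since `f x ≥ (x / b)^d`, the quantity `log x_n - 2 log b` is at
least multiplied by `d` at each step, so it grows like `c d^n`. With `|Δ_n| ≤ d^(n+1)` this
gives `log p_M(n) ≥ |Δ_n| (log b + c / d)` for large `n`.
-/

open Filter Real

/-- `treeP d M n i` = number of `n`-blocks of the hom Markov tree-shift `T_M`
on the `d`-tree whose root label is `i`. -/
def treeP (d : ℕ) {ι : Type} [Fintype ι] (M : Matrix ι ι ℕ) : ℕ → ι → ℕ
  | 0, _ => 1
  | n + 1, i => (∑ j, M i j * treeP d M n j) ^ d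

/-- `|Δ_n| = 1 + d + ⋯ + d^n`. -/
def deltaCard (d n : ℕ) : ℕ := ∑ i ∈ Finset.range (n + 1), d ^ i

/-- Topological entropy of the hom Markov tree-shift `T_M` on the `d`-tree. -/
noncomputable def treeEntropy (d : ℕ) {ι : Type} [Fintype ι] (M : Matrix ι ι ℕ) : ℝ :=
  Filter.limsup (fun n => Real.log (∑ i, treeP d M n i) / (deltaCard d n : ℝ)) Filter.atTop

/-- `M` has entries in `{0,1}`. -/
def IsBinary {ι : Type} [Fintype ι] (M : Matrix ι ι ℕ) : Prop := ∀ i j, M i j ≤ 1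

/-- `M` is irreducible. -/
def MatIrreducible {ι : Type} [Fintype ι] [DecidableEq ι] (M : Matrix ι ι ℕ) : Prop :=
  ∀ i j, ∃ n, 1 ≤ n ∧ 0 < (M ^ n) i j

/-- `M` is the block matrix `[[E_a, R],[O, E_b]]` with `R` binary of constant row sum `l`. -/
def IsMabl (a b l : ℕ) (M : Matrix (Fin (a + b)) (Fin (a + b)) ℕ) : Prop :=
  (∀ i j, M i j ≤ 1) ∧
  (∀ i j : Fin (a + b), (i : ℕ) < a → (j : ℕ) < a → M i j = 1) ∧
  (∀ i j : Fin (a + b), a ≤ (i : ℕ) → a ≤ (j : ℕ) → M i j = 1) ∧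
  (∀ i j : Fin (a + b), a ≤ (i : ℕ) → (j : ℕ) < a → M i j = 0) ∧
  (∀ i : Fin (a + b), (i : ℕ) < a → (∑ j : Fin (a + b), if a ≤ (j : ℕ) then M i j else 0) = l)

open Finset

section Dynamics

variable {f : ℝ → ℝ} {x₀ : ℝ}

theorem lt_self_of_not_exists_fixed (hf : Continuous f) (h₀ : x₀ < f x₀)
    (hfix : ¬ ∃ x, x₀ ≤ x ∧ f x = x) {x : ℝ} (hx : x₀ ≤ x) : x < f x := by
  by_contra! hle
  obtain ⟨c, hc, hfc⟩ : ∃ c ∈ Set.Icc x₀ x, f c - c = 0 :=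
    intermediate_value_Icc' (f := fun y => f y - y) hx (by fun_prop) ⟨by linarith, by linarith⟩
  exact hfix ⟨c, hc.1, sub_eq_zero.mp hfc⟩

theorem le_iterate_of_forall_le_self (h : ∀ x, x₀ ≤ x → x ≤ f x) (n : ℕ) : x₀ ≤ f^[n] x₀ := by
  induction n with
  | zero => exact le_rfl
  | succ n ih => rw [Function.iterate_succ_apply']; exact ih.trans (h _ ih)

theorem tendsto_iterate_atTop_of_lt_self (hf : Continuous f) (h : ∀ x, x₀ ≤ x → x < f x) :
    Tendsto (fun n => f^[n] x₀) atTop atTop := by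
  have hge := le_iterate_of_forall_le_self fun x hx => (h x hx).le
  have hmono : Monotone fun n => f^[n] x₀ := monotone_nat_of_le_succ fun n => by
    rw [Function.iterate_succ_apply']; exact (h _ (hge n)).le
  refine (tendsto_atTop_of_monotone hmono).resolve_right ?_
  rintro ⟨y, hy⟩
  exact (h y (ge_of_tendsto' hy hge)).ne' (isFixedPt_of_tendsto_iterate hy hf.continuousAt)

theorem exists_pos_eventually_mul_pow_le {d : ℝ} {z : ℕ → ℝ} (hd : 0 < d)
    (hz : ∀ n, d * z n ≤ z (n + 1)) (htop : Tendsto z atTop atTop) :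
    ∃ c > 0, ∀ᶠ n in atTop, c * d ^ n ≤ z n := by
  obtain ⟨N, hN⟩ := (htop.eventually_gt_atTop 0).exists
  have hgrow : ∀ k, d ^ k * z N ≤ z (N + k) := by
    intro k
    induction k with
    | zero => simp
    | succ k ih =>
      calc d ^ (k + 1) * z N = d * (d ^ k * z N) := by ring
        _ ≤ d * z (N + k) := by gcongr
        _ ≤ z (N + (k + 1)) := hz _
  refine ⟨z N / d ^ N, by positivity, eventually_atTop.2 ⟨N, fun n hn => ?_⟩⟩
  obtain ⟨k, rfl⟩ := Nat.exists_eq_add_of_le hn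
  calc z N / d ^ N * d ^ (N + k) = d ^ k * z N := by field_simp; ring
    _ ≤ z (N + k) := hgrow k

end Dynamics

theorem deltaCard_succ (d n : ℕ) : deltaCard d (n + 1) = d * deltaCard d n + 1 := by
  rw [deltaCard, sum_range_succ', deltaCard, mul_sum]
  simp [pow_succ, mul_comm]

theorem deltaCard_pos (d n : ℕ) : 0 < deltaCard d n :=
  sum_pos' (fun _ _ => Nat.zero_le _) ⟨0, by simp⟩

theorem deltaCard_lt_pow {d : ℕ} (hd : 2 ≤ d) (n : ℕ) : deltaCard d n < d ^ (n + 1) :=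
  Nat.geomSum_lt hd fun _ hk => mem_range.1 hk

section TreeShift

variable {d : ℕ} {ι : Type} [Fintype ι] {M : Matrix ι ι ℕ}

theorem sum_treeP_le_card_pow (hM : IsBinary M) (n : ℕ) :
    ∑ i, treeP d M n i ≤ Fintype.card ι ^ deltaCard d n := by
  induction n with
  | zero => simp [treeP, deltaCard]
  | succ n ih =>
    have hrow : ∀ i, ∑ j, M i j * treeP d M n j ≤ Fintype.card ι ^ deltaCard d n := fun i =>
      (sum_le_sum fun j _ => mul_le_of_le_one_left (Nat.zero_le _) (hM i j)).trans ih
    calc ∑ i, treeP d M (n + 1) i = ∑ i, (∑ j, M i j * treeP d M n j) ^ d := rfl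
      _ ≤ ∑ _i : ι, (Fintype.card ι ^ deltaCard d n) ^ d :=
        sum_le_sum fun i _ => Nat.pow_le_pow_left (hrow i) d
      _ = Fintype.card ι ^ deltaCard d (n + 1) := by
        rw [sum_const, card_univ, smul_eq_mul, deltaCard_succ, ← pow_mul, pow_succ', mul_comm d]

theorem le_treeEntropy_of_eventually_le (hM : IsBinary M) {c : ℝ}
    (h : ∀ᶠ n in atTop, c ≤ log (∑ i, treeP d M n i) / deltaCard d n) : c ≤ treeEntropy d M := by
  refine le_limsup_of_frequently_le h.frequently
    (isBoundedUnder_of ⟨log (Fintype.card ι), fun n => ?_⟩)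
  rw [div_le_iff₀ (by exact_mod_cast deltaCard_pos d n), mul_comm, ← log_pow]
  rcases (sum_nonneg fun i _ => Nat.cast_nonneg (treeP d M n i) : (0 : ℝ) ≤ _).eq_or_lt with
    h0 | hpos
  · rw [← h0, log_zero, ← Nat.cast_pow]
    exact log_natCast_nonneg _
  · exact log_le_log hpos (by exact_mod_cast sum_treeP_le_card_pow hM n)

theorem treeP_eq_treeP_of_fiber_sum_eq {κ : Type} [Fintype κ] [DecidableEq κ]
    {N : Matrix κ κ ℕ} (φ : ι → κ) (hMN : ∀ i k, ∑ j with φ j = k, M i j = N (φ i) k)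
    (n : ℕ) (i : ι) : treeP d M n i = treeP d N n (φ i) := by
  induction n generalizing i with
  | zero => rfl
  | succ n ih =>
    simp only [treeP, ih]
    congr 1
    rw [← sum_fiberwise univ φ]
    refine sum_congr rfl fun k _ => ?_
    rw [← hMN, sum_mul]
    exact sum_congr rfl fun j hj => by rw [(mem_filter.1 hj).2]

end TreeShift

def mablQuotient (a b l : ℕ) : Matrix (Fin 2) (Fin 2) ℕ := !![a, l; 0, b]

def mablBlock (a b : ℕ) (i : Fin (a + b)) : Fin 2 := if (i : ℕ) < a then 0 else 1

noncomputable def mablMap (d a b l : ℕ) (x : ℝ) : ℝ := (((a : ℝ) * x + l) / b) ^ d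

section Mabl

variable {d a b l : ℕ}

theorem mablBlock_of_lt {i : Fin (a + b)} (hi : (i : ℕ) < a) : mablBlock a b i = 0 := if_pos hi

theorem mablBlock_of_le {i : Fin (a + b)} (hi : a ≤ (i : ℕ)) : mablBlock a b i = 1 :=
  if_neg hi.not_gt

theorem mablBlock_eq_zero_iff {j : Fin (a + b)} : mablBlock a b j = 0 ↔ (j : ℕ) < a := by
  unfold mablBlock; split_ifs with h <;> simp [h]

theorem mablBlock_eq_one_iff {j : Fin (a + b)} : mablBlock a b j = 1 ↔ a ≤ (j : ℕ) := by
  rw [← not_lt, ← mablBlock_eq_zero_iff]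
  unfold mablBlock; split_ifs <;> simp

theorem card_mablBlock_eq_zero : #{j | mablBlock a b j = 0} = a := by
  simp only [mablBlock_eq_zero_iff, Fin.card_filter_val_lt]; omega

theorem card_mablBlock_eq_one : #{j | mablBlock a b j = 1} = b := by
  have := card_filter_add_card_filter_not (s := univ) fun j : Fin (a + b) => (j : ℕ) < a
  simp only [mablBlock_eq_one_iff, ← not_lt, Fin.card_filter_val_lt, card_univ,
    Fintype.card_fin] at this ⊢
  omega

theorem IsMabl.sum_fiber_eq {M : Matrix (Fin (a + b)) (Fin (a + b)) ℕ} (hM : IsMabl a b l M)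
    (i : Fin (a + b)) (k : Fin 2) :
    ∑ j with mablBlock a b j = k, M i j = mablQuotient a b l (mablBlock a b i) k := by
  obtain ⟨-, hUU, hLL, hLU, hUL⟩ := hM
  rcases lt_or_ge (i : ℕ) a with hi | hi
  · rw [mablBlock_of_lt hi]
    match k with
    | 0 =>
      rw [sum_const_nat fun j hj => hUU i j hi (mablBlock_eq_zero_iff.1 (mem_filter.1 hj).2),
        card_mablBlock_eq_zero]
      simp [mablQuotient]
    | 1 =>
      rw [← hUL i hi, ← sum_filter]
      simp [mablQuotient, mablBlock_eq_one_iff]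
  · rw [mablBlock_of_le hi]
    match k with
    | 0 =>
      rw [sum_const_nat fun j hj => hLU i j hi (mablBlock_eq_zero_iff.1 (mem_filter.1 hj).2)]
      simp [mablQuotient]
    | 1 =>
      rw [sum_const_nat fun j hj => hLL i j hi (mablBlock_eq_one_iff.1 (mem_filter.1 hj).2),
        card_mablBlock_eq_one]
      simp [mablQuotient]

theorem treeP_mablQuotient_succ_zero (n : ℕ) :
    treeP d (mablQuotient a b l) (n + 1) 0 =
      (a * treeP d (mablQuotient a b l) n 0 + l * treeP d (mablQuotient a b l) n 1) ^ d := by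
  simp [treeP, Fin.sum_univ_two, mablQuotient]

theorem treeP_mablQuotient_succ_one (n : ℕ) :
    treeP d (mablQuotient a b l) (n + 1) 1 = (b * treeP d (mablQuotient a b l) n 1) ^ d := by
  simp [treeP, Fin.sum_univ_two, mablQuotient]

theorem mul_treeP_mablQuotient_one (n : ℕ) :
    b * treeP d (mablQuotient a b l) n 1 = b ^ deltaCard d n := by
  induction n with
  | zero => simp [treeP, deltaCard]
  | succ n ih =>
    rw [treeP_mablQuotient_succ_one, ih, deltaCard_succ, ← pow_mul, pow_succ', mul_comm d]

theorem treeP_mablQuotient_zero_eq (hb : b ≠ 0) (n : ℕ) :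
    (treeP d (mablQuotient a b l) n 0 : ℝ) =
      (mablMap d a b l)^[n] 1 * treeP d (mablQuotient a b l) n 1 := by
  induction n with
  | zero => simp [treeP]
  | succ n ih =>
    rw [Function.iterate_succ_apply', treeP_mablQuotient_succ_zero, treeP_mablQuotient_succ_one]
    push_cast
    rw [ih, mablMap, ← mul_pow]
    congr 1
    field_simp

theorem continuous_mablMap : Continuous (mablMap d a b l) := by
  unfold mablMap; fun_prop

theorem one_lt_mablMap_one (hd : d ≠ 0) (hb : 0 < b) (hsum : b < a + l) :
    1 < mablMap d a b l 1 := by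
  refine one_lt_pow₀ ?_ hd
  rw [one_lt_div (by exact_mod_cast hb), mul_one]
  exact_mod_cast hsum

theorem mul_log_sub_le_log_mablMap (hd : 2 ≤ d) (ha : 1 ≤ a) (hb : 0 < b) {x : ℝ} (hx : 0 < x) :
    d * (log x - 2 * log b) ≤ log (mablMap d a b l x) - 2 * log b := by
  have hxb : (x / b) ^ d ≤ mablMap d a b l x := by
    unfold mablMap
    gcongr
    have : (1 : ℝ) ≤ a := by exact_mod_cast ha
    nlinarith [(Nat.cast_nonneg l : (0 : ℝ) ≤ l)]
  have hlog := log_le_log (by positivity) hxb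
  rw [log_pow, log_div hx.ne' (by positivity)] at hlog
  have hlogb : 0 ≤ log b := log_natCast_nonneg b
  have hd' : (2 : ℝ) ≤ d := by exact_mod_cast hd
  nlinarith

theorem IsMabl.le_log_sum_treeP {M : Matrix (Fin (a + b)) (Fin (a + b)) ℕ}
    (hM : IsMabl a b l M) (ha : 0 < a) (hb : 0 < b) {n : ℕ} (hx : 0 < (mablMap d a b l)^[n] 1) :
    (deltaCard d n - 1) * log b + log ((mablMap d a b l)^[n] 1) ≤ log (∑ i, treeP d M n i) := by
  set T := treeP d (mablQuotient a b l)
  have hT1 : (b : ℝ) * T n 1 = b ^ deltaCard d n := by exact_mod_cast mul_treeP_mablQuotient_one n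
  have hT1pos : (0 : ℝ) < T n 1 := by
    have : (0 : ℝ) < b := by exact_mod_cast hb
    exact pos_of_mul_pos_right (hT1 ▸ by positivity) this.le
  have hlogT1 : log (T n 1) = (deltaCard d n - 1) * log b := by
    have := congrArg log hT1
    rw [log_mul (by positivity) hT1pos.ne', log_pow] at this
    linarith
  have hroot : (T n 0 : ℝ) ≤ ∑ i, (treeP d M n i : ℝ) := by
    have : T n 0 = treeP d M n ⟨0, by omega⟩ := by
      rw [treeP_eq_treeP_of_fiber_sum_eq _ hM.sum_fiber_eq, mablBlock_of_lt ha]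
    rw [this]
    exact single_le_sum (fun i _ => Nat.cast_nonneg (treeP d M n i)) (mem_univ _)
  have hT0 : (T n 0 : ℝ) = (mablMap d a b l)^[n] 1 * T n 1 := treeP_mablQuotient_zero_eq hb.ne' n
  calc (deltaCard d n - 1) * log b + log ((mablMap d a b l)^[n] 1) = log (T n 0) := by
        rw [hT0, log_mul hx.ne' hT1pos.ne', hlogT1, add_comm]
    _ ≤ log (∑ i, treeP d M n i) := log_le_log (by rw [hT0]; positivity) hroot

end Mabl

theorem treeEntropy_Mabl_gt_of_no_fixed_point_general {d a b l : ℕ} (hd : 2 ≤ d)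
    (ha : 1 ≤ a) (hab : a < b) (hsum : b < a + l)
    (hfix : ¬ ∃ x : ℝ, 1 ≤ x ∧ (((a : ℝ) * x + l) / b) ^ d = x)
    (M : Matrix (Fin (a + b)) (Fin (a + b)) ℕ) (hM : IsMabl a b l M) :
    treeEntropy d M > Real.log b := by
  have hb : 0 < b := by omega
  set x : ℕ → ℝ := fun n => (mablMap d a b l)^[n] 1
  have hgt : ∀ y, 1 ≤ y → y < mablMap d a b l y := fun _ =>
    lt_self_of_not_exists_fixed continuous_mablMap (one_lt_mablMap_one (by omega) hb hsum) hfix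
  have hxpos : ∀ n, 0 < x n := fun n =>
    one_pos.trans_le (le_iterate_of_forall_le_self (fun y hy => (hgt y hy).le) n)
  have hz : Tendsto (fun n => log (x n) - 2 * log b) atTop atTop :=
    tendsto_atTop_add_const_right _ _
      (tendsto_log_atTop.comp (tendsto_iterate_atTop_of_lt_self continuous_mablMap hgt))
  obtain ⟨c, hc, hcz⟩ := exists_pos_eventually_mul_pow_le (d := (d : ℝ)) (by positivity)
    (fun n => by
      simpa only [x, Function.iterate_succ_apply'] using
        mul_log_sub_le_log_mablMap hd ha hb (hxpos n))
    hz
  refine (lt_add_of_pos_right _ (by positivity : 0 < c / d)).trans_le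
    (le_treeEntropy_of_eventually_le hM.1 (hcz.mono fun n hn => ?_))
  have hΔ : c / d * deltaCard d n ≤ c * d ^ n := by
    have : (deltaCard d n : ℝ) ≤ d ^ (n + 1) := by exact_mod_cast (deltaCard_lt_pow hd n).le
    calc c / d * deltaCard d n ≤ c / d * d ^ (n + 1) := by gcongr
      _ = c * d ^ n := by field_simp; ring
  rw [le_div_iff₀ (by exact_mod_cast deltaCard_pos d n)]
  linarith [hM.le_log_sum_treeP (by omega) hb (hxpos n), log_natCast_nonneg b]

/-- **Theorem 3.2 (b)(i).** If `b > a ≥ 1`, `0 < l ≤ b`, `a + l > b` and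
`f(x) = ((a x + l)/b)^d` has no fixed point in `[1,∞)`, then `h(T_{M(a,b;l)}) > log b`. -/
theorem treeEntropy_Mabl_gt_of_no_fixed_point {d a b l : ℕ} (hd : 2 ≤ d)
    (ha : 1 ≤ a) (hab : a < b) (hl : 0 < l) (hlb : l ≤ b) (hsum : b < a + l)
    (hfix : ¬ ∃ x : ℝ, 1 ≤ x ∧ (((a : ℝ) * x + l) / b) ^ d = x)
    (M : Matrix (Fin (a + b)) (Fin (a + b)) ℕ) (hM : IsMabl a b l M) :
    treeEntropy d M > Real.log b :=
  treeEntropy_Mabl_gt_of_no_fixed_point_general hd ha hab hsum hfix M hM
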